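/- The negative L¹-distance kernel on PIFs, k₁(D₁,D₂) := −∫_ℝ |PIF_{D₁}(x) − PIF_{D₂}(x)| dx, is conditionally positive definite: for any finite collection of persistence diagrams D₁,…,Dₙ and real coefficients a₁,…,aₙ with Σᵢ aᵢ = 0, we have Σᵢ Σⱼ aᵢ aⱼ k₁(Dᵢ, Dⱼ) ≥ 0. -/

import Mathlib

/-!
By linearity of the integral the kernel sum is `-∫ Σᵢⱼ aᵢ aⱼ |PIF_{Dᵢ}(x) - PIF_{Dⱼ}(x)| dx`,
so it suffices that `ℝ` is of negative type. For reals `xᵢ ≥ c` one has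
`|xᵢ - xⱼ| = (xᵢ - c) + (xⱼ - c) - 2 (min xᵢ xⱼ - c)`: the first two terms vanish against `Σ aᵢ = 0`,
and `min xᵢ xⱼ - c = ∫ 1_(c, xᵢ] 1_(c, xⱼ]` is a Gram kernel, hence positive semidefinite.
-/

open MeasureTheory

noncomputable def PIF (D : Multiset (ℝ × ℝ)) (ε : ℝ) : ℕ :=
  Multiset.card (D.filter (fun p => p.1 ≤ ε ∧ ε ≤ p.2))

/-- The negative `L¹`-distance kernel on PIFs. -/
noncomputable def pifKernel (D₁ D₂ : Multiset (ℝ × ℝ)) : ℝ :=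
  -∫ x, |(PIF D₁ x : ℝ) - (PIF D₂ x : ℝ)|

open Finset

theorem indicator_Ioc_mul_indicator_Ioc (c x y : ℝ) :
    (fun t => (Set.Ioc c x).indicator (1 : ℝ → ℝ) t * (Set.Ioc c y).indicator 1 t)
      = (Set.Ioc c (min x y)).indicator 1 := by
  rw [← Pi.mul_def, ← Set.inter_indicator_one, Set.Ioc_inter_Ioc, max_self]

theorem integral_indicator_Ioc_mul_indicator_Ioc {c x y : ℝ} (hx : c ≤ x) (hy : c ≤ y) :
    ∫ t, (Set.Ioc c x).indicator 1 t * (Set.Ioc c y).indicator 1 t = min x y - c := by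
  rw [indicator_Ioc_mul_indicator_Ioc, integral_indicator_one measurableSet_Ioc,
    Real.volume_real_Ioc_of_le (le_min hx hy)]

theorem integrable_indicator_Ioc_mul_indicator_Ioc (c x y : ℝ) :
    Integrable (fun t => (Set.Ioc c x).indicator (1 : ℝ → ℝ) t * (Set.Ioc c y).indicator 1 t) := by
  rw [indicator_Ioc_mul_indicator_Ioc]
  exact (integrable_indicator_iff measurableSet_Ioc).2 (integrableOn_const measure_Ioc_lt_top.ne)

section NegativeType

variable {ι : Type*} [Fintype ι]

theorem sum_sum_mul_mul_add_eq_zero {a : ι → ℝ} (ha : ∑ i, a i = 0) (u : ι → ℝ) :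
    ∑ i, ∑ j, a i * a j * (u i + u j) = 0 := by
  simp only [mul_add, sum_add_distrib]
  rw [sum_comm (f := fun i j => a i * a j * u j)]
  simp only [mul_right_comm (a _) (a _), ← sum_mul, ← mul_sum, ha]
  simp

theorem sum_sum_mul_mul_integral_mul_nonneg {α : Type*} [MeasurableSpace α] {μ : Measure α}
    (a : ι → ℝ) {g : ι → α → ℝ} (hg : ∀ i j, Integrable (fun t => g i t * g j t) μ) :
    0 ≤ ∑ i, ∑ j, a i * a j * ∫ t, g i t * g j t ∂μ := by
  have hsq : ∀ t, ∑ i, ∑ j, a i * a j * (g i t * g j t) = (∑ i, a i * g i t) ^ 2 := fun t => by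
    rw [sq, sum_mul_sum]
    exact sum_congr rfl fun i _ => sum_congr rfl fun j _ => by ring
  calc 0 ≤ ∫ t, (∑ i, a i * g i t) ^ 2 ∂μ := integral_nonneg fun t => sq_nonneg _
    _ = ∑ i, ∑ j, a i * a j * ∫ t, g i t * g j t ∂μ := by
      simp only [← hsq, ← integral_const_mul]
      rw [integral_finsetSum _ fun i _ => integrable_finsetSum _ fun j _ =>
        (hg i j).const_mul _]
      exact sum_congr rfl fun i _ =>
        integral_finsetSum _ fun j _ => (hg i j).const_mul _

theorem sum_sum_mul_mul_abs_sub_nonpos {a : ι → ℝ} (ha : ∑ i, a i = 0) (x : ι → ℝ) :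
    ∑ i, ∑ j, a i * a j * |x i - x j| ≤ 0 := by
  obtain ⟨c, hc⟩ := Finite.exists_ge x
  have habs : ∀ i j, |x i - x j|
      = ((x i - c) + (x j - c)) - 2 * ∫ t, (Set.Ioc c (x i)).indicator 1 t *
          (Set.Ioc c (x j)).indicator 1 t := fun i j => by
    rw [integral_indicator_Ioc_mul_indicator_Ioc (hc i) (hc j)]
    rcases le_total (x i) (x j) with h | h
    · rw [min_eq_left h, abs_of_nonpos (by linarith)]; ring
    · rw [min_eq_right h, abs_of_nonneg (by linarith)]; ring
  have hgram := sum_sum_mul_mul_integral_mul_nonneg a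
    (fun i j => integrable_indicator_Ioc_mul_indicator_Ioc c (x i) (x j))
  simp only [habs, mul_sub, sum_sub_distrib, sum_sum_mul_mul_add_eq_zero ha]
  simp only [mul_left_comm _ (2 : ℝ), ← mul_sum]
  linarith

theorem sum_sum_mul_mul_integral_abs_sub_nonpos {α : Type*} [MeasurableSpace α] {μ : Measure α}
    {a : ι → ℝ} (ha : ∑ i, a i = 0) {f : ι → α → ℝ} (hf : ∀ i, Integrable (f i) μ) :
    ∑ i, ∑ j, a i * a j * ∫ t, |f i t - f j t| ∂μ ≤ 0 := by
  have hint : ∀ i j, Integrable (fun t => a i * a j * |f i t - f j t|) μ := fun i j =>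
    ((hf i).sub (hf j)).abs.const_mul _
  calc ∑ i, ∑ j, a i * a j * ∫ t, |f i t - f j t| ∂μ
      = ∫ t, ∑ i, ∑ j, a i * a j * |f i t - f j t| ∂μ := by
        simp only [← integral_const_mul]
        rw [integral_finsetSum _ fun i _ => integrable_finsetSum _ fun j _ => hint i j]
        exact sum_congr rfl fun i _ => (integral_finsetSum _ fun j _ => hint i j).symm
    _ ≤ 0 := integral_nonpos fun t => sum_sum_mul_mul_abs_sub_nonpos ha fun i => f i t

end NegativeType

theorem PIF_cons (q : ℝ × ℝ) (D : Multiset (ℝ × ℝ)) (x : ℝ) :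
    (PIF (q ::ₘ D) x : ℝ) = (Set.Icc q.1 q.2).indicator 1 x + PIF D x := by
  simp only [PIF, Multiset.filter_cons, Set.indicator_apply, Set.mem_Icc]
  split <;> simp [add_comm]

theorem integrable_PIF (D : Multiset (ℝ × ℝ)) : Integrable (fun x => (PIF D x : ℝ)) := by
  induction D using Multiset.induction with
  | empty => simp [PIF]
  | cons q D ih =>
    simp only [PIF_cons]
    exact ((integrable_indicator_iff measurableSet_Icc).2
      (integrableOn_const measure_Icc_lt_top.ne)).add ih

theorem pifKernel_conditionally_positive_definite_general (n : ℕ)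
    (D : Fin n → Multiset (ℝ × ℝ))
    (a : Fin n → ℝ) (ha : ∑ i, a i = 0) :
    0 ≤ ∑ i, ∑ j, a i * a j * pifKernel (D i) (D j) := by
  have h := sum_sum_mul_mul_integral_abs_sub_nonpos ha fun i => integrable_PIF (D i)
  simp only [pifKernel, mul_neg, sum_neg_distrib]
  linarith

/-- The kernel `k₁(D₁, D₂) = -‖PIF_{D₁} - PIF_{D₂}‖₁` is conditionally
positive definite. -/
theorem pifKernel_conditionally_positive_definite (n : ℕ)
    (D : Fin n → Multiset (ℝ × ℝ)) (hD : ∀ i, ∀ q ∈ D i, q.1 ≤ q.2)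
    (a : Fin n → ℝ) (ha : ∑ i, a i = 0) :
    0 ≤ ∑ i, ∑ j, a i * a j * pifKernel (D i) (D j) :=
  pifKernel_conditionally_positive_definite_general n D a ha
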